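/- A Fishburn permutation avoids the classical pattern 3142 if and only if it avoids the classical pattern 231; that is, the set of Fishburn permutations of size n avoiding 3142 equals the set of Fishburn permutations of size n avoiding 231, and hence F_n(3142) = C_n. -/

import Mathlib

open Finset

/-- The list of values of a permutation of `Fin n` (0-based values). -/
def permList {n : ℕ} (π : Equiv.Perm (Fin n)) : List ℕ :=
  (List.finRange n).map fun i => (π i : ℕ)

/-- A sequence `w` of distinct integers contains the classical pattern `p`:
some subsequence of `w` is order-isomorphic to `p`. -/
def SeqContains (w p : List ℕ) : Prop :=
  ∃ f : Fin p.length → Fin w.length, StrictMono f ∧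
    ∀ i j : Fin p.length, p.get i < p.get j ↔ w.get (f i) < w.get (f j)

/-- A permutation avoids a classical pattern (given as the list of its values). -/
def AvoidsPat {n : ℕ} (π : Equiv.Perm (Fin n)) (p : List ℕ) : Prop :=
  ¬ SeqContains (permList π) p

/-- `π` is a Fishburn permutation: it avoids the bivincular pattern (231,{1},{1}),
i.e. there are no positions `i < k` with `π i = π k + 1` and `π i < π (i+1)`
(0-based values, so `π i = π k + 1` encodes `π(i) > 1` and `π(k) = π(i) - 1`). -/
def IsFishburn {n : ℕ} (π : Equiv.Perm (Fin n)) : Prop :=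
  ∀ i k : ℕ, ∀ hi : i < n, ∀ hk : k < n, ∀ _hik : i < k,
    (π ⟨i, hi⟩ : ℕ) = (π ⟨k, hk⟩ : ℕ) + 1 →
    ¬ ((π ⟨i, hi⟩ : ℕ) < (π ⟨i + 1, by omega⟩ : ℕ))

/-- A permutation is indecomposable if it is not the direct sum of two nonempty
permutations, i.e. no proper nonempty initial segment of positions maps onto the
corresponding initial segment of values. -/
def IsIndecomposable {n : ℕ} (π : Equiv.Perm (Fin n)) : Prop :=
  ¬ ∃ k : ℕ, 0 < k ∧ k < n ∧ ∀ i : Fin n, (i : ℕ) < k → (π i : ℕ) < k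


lemma permList_length {n : ℕ} (π : Equiv.Perm (Fin n)) : (permList π).length = n := by
  simp [permList]

lemma permList_get {n : ℕ} (π : Equiv.Perm (Fin n)) (i : Fin (permList π).length) :
    (permList π).get i = (π (Fin.cast (permList_length π) i) : ℕ) := by
  simp [permList]
  exact (List.getElem_map ..).trans (by simp [Fin.cast])

lemma contains231_iff {n : ℕ} (π : Equiv.Perm (Fin n)) :
    SeqContains (permList π) [2, 3, 1] ↔
      ∃ a b c : Fin n, (a:ℕ) < b ∧ (b:ℕ) < c ∧ (π c:ℕ) < π a ∧ (π a:ℕ) < π b := by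
  have e := permList_length π
  constructor
  · rintro ⟨f, hf, hiff⟩
    refine ⟨Fin.cast e (f ⟨0, by decide⟩), Fin.cast e (f ⟨1, by decide⟩),
      Fin.cast e (f ⟨2, by decide⟩), ?_, ?_, ?_, ?_⟩
    · exact hf (by decide)
    · exact hf (by decide)
    · have := (hiff ⟨2, by decide⟩ ⟨0, by decide⟩).mp (by decide)
      rwa [permList_get, permList_get] at this
    · have := (hiff ⟨0, by decide⟩ ⟨1, by decide⟩).mp (by decide)
      rwa [permList_get, permList_get] at this
  · rintro ⟨a, b, c, hab, hbc, hca, hab2⟩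
    refine ⟨fun i => Fin.cast e.symm (if (i:ℕ) = 0 then a else if (i:ℕ) = 1 then b else c),
      ?_, ?_⟩
    · intro i j hij
      have hi := i.isLt; have hj := j.isLt
      simp only [List.length_cons, List.length_nil] at hi hj
      rw [Fin.lt_def] at hij ⊢
      simp only [Fin.coe_cast]
      split_ifs <;> omega
    · intro i j
      have hi := i.isLt; have hj := j.isLt
      simp only [List.length_cons, List.length_nil] at hi hj
      rw [permList_get, permList_get]
      simp only [Fin.cast_cast, Fin.coe_cast]
      obtain ⟨iv, hiv⟩ := i; obtain ⟨jv, hjv⟩ := j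
      interval_cases iv <;> interval_cases jv <;> simp_all [List.get] <;> omega

lemma contains3142_iff {n : ℕ} (π : Equiv.Perm (Fin n)) :
    SeqContains (permList π) [3, 1, 4, 2] ↔
      ∃ a b c d : Fin n, (a:ℕ) < b ∧ (b:ℕ) < c ∧ (c:ℕ) < d ∧
        (π b:ℕ) < π d ∧ (π d:ℕ) < π a ∧ (π a:ℕ) < π c := by
  have e := permList_length π
  constructor
  · rintro ⟨f, hf, hiff⟩
    refine ⟨Fin.cast e (f ⟨0, by decide⟩), Fin.cast e (f ⟨1, by decide⟩),
      Fin.cast e (f ⟨2, by decide⟩), Fin.cast e (f ⟨3, by decide⟩),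
      ?_, ?_, ?_, ?_, ?_, ?_⟩
    · exact hf (by decide)
    · exact hf (by decide)
    · exact hf (by decide)
    · have := (hiff ⟨1, by decide⟩ ⟨3, by decide⟩).mp (by decide)
      rwa [permList_get, permList_get] at this
    · have := (hiff ⟨3, by decide⟩ ⟨0, by decide⟩).mp (by decide)
      rwa [permList_get, permList_get] at this
    · have := (hiff ⟨0, by decide⟩ ⟨2, by decide⟩).mp (by decide)
      rwa [permList_get, permList_get] at this
  · rintro ⟨a, b, c, d, hab, hbc, hcd, h1, h2, h3⟩
    refine ⟨fun i => Fin.cast e.symm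
      (if (i:ℕ) = 0 then a else if (i:ℕ) = 1 then b else if (i:ℕ) = 2 then c else d),
      ?_, ?_⟩
    · intro i j hij
      have hi := i.isLt; have hj := j.isLt
      simp only [List.length_cons, List.length_nil] at hi hj
      rw [Fin.lt_def] at hij ⊢
      simp only [Fin.coe_cast]
      split_ifs <;> omega
    · intro i j
      have hi := i.isLt; have hj := j.isLt
      simp only [List.length_cons, List.length_nil] at hi hj
      rw [permList_get, permList_get]
      simp only [Fin.cast_cast, Fin.coe_cast]
      obtain ⟨iv, hiv⟩ := i; obtain ⟨jv, hjv⟩ := j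
      interval_cases iv <;> interval_cases jv <;> simp_all [List.get] <;> omega

def Av {n : ℕ} (π : Equiv.Perm (Fin n)) : Prop :=
  ∀ a b c : Fin n, (a:ℕ) < b → (b:ℕ) < c → (π c:ℕ) < π a → (π a:ℕ) < π b → False

section PartOne
variable {n : ℕ} (π : Equiv.Perm (Fin n))

lemma av_fishburn (h : Av π) : IsFishburn π := by
  intro i k hi hk hik heq hlt
  rcases lt_trichotomy (i+1) k with h1 | h1 | h1
  · exact h ⟨i, hi⟩ ⟨i+1, by omega⟩ ⟨k, hk⟩ (by simp) (by simpa) (by omega) hlt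
  · subst h1
    omega
  · omega

lemma no3142_of_av (h : Av π)
    (occ : ∃ a b c d : Fin n, (a:ℕ) < b ∧ (b:ℕ) < c ∧ (c:ℕ) < d ∧
        (π b:ℕ) < π d ∧ (π d:ℕ) < π a ∧ (π a:ℕ) < π c) : False := by
  obtain ⟨a, b, c, d, hab, hbc, hcd, h1, h2, h3⟩ := occ
  exact h a c d (by omega) hcd (by omega) h3

lemma av_of_fishburn_no3142 (hF : IsFishburn π)
    (hA : ¬ ∃ a b c d : Fin n, (a:ℕ) < b ∧ (b:ℕ) < c ∧ (c:ℕ) < d ∧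
        (π b:ℕ) < π d ∧ (π d:ℕ) < π a ∧ (π a:ℕ) < π c) : Av π := by
  by_contra h
  unfold Av at h
  push_neg at h
  have hP : ∃ v : ℕ, ∃ a b c : Fin n, (a:ℕ) < b ∧ (b:ℕ) < c ∧ (π c:ℕ) < π a ∧
      (π a:ℕ) < π b ∧ (π a:ℕ) = v := by
    obtain ⟨a, b, c, h1, h2, h3, h4⟩ := h
    exact ⟨π a, a, b, c, h1, h2, h3, h4.1, rfl⟩
  classical
  obtain ⟨a, b, c, h1, h2, h3, h4, h5⟩ := Nat.find_spec hP
  have hmin := fun v (hv : v < Nat.find hP) => Nat.find_min hP hv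
  -- m : position of value (π a) - 1
  have hva : 1 ≤ (π a : ℕ) := by omega
  have hlt : (π a : ℕ) - 1 < n := by have := (π a).isLt; omega
  set m := π.symm ⟨(π a : ℕ) - 1, hlt⟩ with hm
  have hπm : (π m : ℕ) = (π a : ℕ) - 1 := by rw [hm]; simp
  have hcm : (π c : ℕ) ≠ (π m : ℕ) → c ≠ m := fun hne hc => hne (by rw [hc])
  have hbm : (b : ℕ) < m := by
    rcases lt_trichotomy (m : ℕ) (b : ℕ) with hc | hc | hc
    · -- occurrence (m, b, c) with smaller first value
      exfalso
      refine hmin (π m) (by omega) ⟨m, b, c, hc, h2, ?_, by omega, rfl⟩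
      have : c ≠ m := by intro hcc; rw [hcc] at h2; omega
      have : (π c : ℕ) ≠ (π m : ℕ) := fun he => this (π.injective (Fin.ext he))
      omega
    · exfalso
      have : m = b := Fin.ext hc
      rw [this] at hπm
      omega
    · exact hc
  have ham : (a : ℕ) < m := by omega
  have hFa := hF a m a.isLt m.isLt ham (by simpa using by omega)
  have ha1 : (a : ℕ) + 1 < n := by have := m.isLt; omega
  set a1 : Fin n := ⟨(a:ℕ)+1, ha1⟩ with ha1d
  have hne : π a1 ≠ π a := fun he => by
    have := π.injective he
    rw [ha1d] at this
    have := congrArg Fin.val this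
    simp at this
  have h6 : (π a1 : ℕ) < π a := by
    have := hFa
    simp only [Fin.eta] at this
    have hle : ¬ ((π a : ℕ) < (π a1 : ℕ)) := by
      convert this using 3
    have : (π a1 : ℕ) ≠ (π a : ℕ) := fun he => hne (Fin.ext he)
    omega
  have h7 : (a:ℕ) + 1 < b := by
    rcases lt_or_eq_of_le (by omega : (a:ℕ) + 1 ≤ b) with hc | hc
    · exact hc
    · exfalso
      have : a1 = b := Fin.ext hc
      rw [this] at h6
      omega
  have h8 : (π a1 : ℕ) < π m := by
    have : a1 ≠ m := by
      intro he
      have := congrArg Fin.val he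
      simp [ha1d] at this
      omega
    have : π a1 ≠ π m := fun he => this (π.injective he)
    have : (π a1 : ℕ) ≠ (π m : ℕ) := fun he => this (Fin.ext he)
    omega
  exact hA ⟨a, a1, b, m, by simp [ha1d], h7, hbm, h8, by omega, h4⟩
end PartOne

section Glue
variable {n p : ℕ} (hp : p ≤ n) (L : Equiv.Perm (Fin p)) (R : Equiv.Perm (Fin (n - p)))

def glueF (x : Fin (n+1)) : Fin (n+1) :=
  if h : (x:ℕ) < p then ⟨L ⟨x, h⟩, by have := (L ⟨x, h⟩).isLt; omega⟩
  else if h2 : (x:ℕ) = p then ⟨n, by omega⟩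
  else ⟨p + (R ⟨(x:ℕ) - (p+1), by have := x.isLt; omega⟩ : ℕ), by
    have := (R ⟨(x:ℕ) - (p+1), by have := x.isLt; omega⟩).isLt; omega⟩

def glueG (y : Fin (n+1)) : Fin (n+1) :=
  if h : (y:ℕ) < p then ⟨L.symm ⟨y, h⟩, by have := (L.symm ⟨y, h⟩).isLt; omega⟩
  else if h2 : (y:ℕ) = n then ⟨p, by omega⟩
  else ⟨p + 1 + (R.symm ⟨(y:ℕ) - p, by have := y.isLt; omega⟩ : ℕ), by
    have := (R.symm ⟨(y:ℕ) - p, by have := y.isLt; omega⟩).isLt; omega⟩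

lemma glueF_lt (x : Fin (n+1)) (h : (x:ℕ) < p) :
    (glueF hp L R x : ℕ) = L ⟨x, h⟩ := by simp [glueF, h]

lemma glueF_eq (x : Fin (n+1)) (h : (x:ℕ) = p) :
    (glueF hp L R x : ℕ) = n := by simp [glueF, h]

lemma glueF_gt (x : Fin (n+1)) (h : p < (x:ℕ)) (hb : (x:ℕ) - (p+1) < n - p) :
    (glueF hp L R x : ℕ) = p + R ⟨(x:ℕ) - (p+1), hb⟩ := by
  simp [glueF, show ¬ (x:ℕ) < p by omega, show ¬ (x:ℕ) = p by omega]

lemma glueG_lt (y : Fin (n+1)) (h : (y:ℕ) < p) :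
    (glueG hp L R y : ℕ) = L.symm ⟨y, h⟩ := by simp [glueG, h]

lemma glueG_eq (y : Fin (n+1)) (h : (y:ℕ) = n) :
    (glueG hp L R y : ℕ) = p := by
  simp [glueG, h, show ¬ n < p by omega]

lemma glueG_gt (y : Fin (n+1)) (h : p ≤ (y:ℕ)) (h2 : (y:ℕ) ≠ n) (hb : (y:ℕ) - p < n - p) :
    (glueG hp L R y : ℕ) = p + 1 + R.symm ⟨(y:ℕ) - p, hb⟩ := by
  simp [glueG, show ¬ (y:ℕ) < p by omega, h2]

def glue : Equiv.Perm (Fin (n+1)) where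
  toFun := glueF hp L R
  invFun := glueG hp L R
  left_inv := by
    intro x
    apply Fin.ext
    rcases lt_trichotomy (x:ℕ) p with h | h | h
    · have h1 := glueF_lt hp L R x h
      have h2 : (glueF hp L R x : ℕ) < p := by rw [h1]; exact (L ⟨x, h⟩).isLt
      rw [glueG_lt hp L R _ h2]
      have : (⟨(glueF hp L R x : ℕ), h2⟩ : Fin p) = L ⟨x, h⟩ := Fin.ext h1
      rw [this, Equiv.symm_apply_apply]
    · have h1 := glueF_eq hp L R x h
      rw [glueG_eq hp L R _ h1, h]
    · have hb : (x:ℕ) - (p+1) < n - p := by have := x.isLt; omega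
      have h1 := glueF_gt hp L R x h hb
      have hr := (R ⟨(x:ℕ) - (p+1), hb⟩).isLt
      have h2 : p ≤ (glueF hp L R x : ℕ) := by omega
      have h3 : (glueF hp L R x : ℕ) ≠ n := by omega
      have hb2 : (glueF hp L R x : ℕ) - p < n - p := by omega
      rw [glueG_gt hp L R _ h2 h3 hb2]
      have he : (⟨(glueF hp L R x : ℕ) - p, hb2⟩ : Fin (n - p)) = R ⟨(x:ℕ) - (p+1), hb⟩ :=
        Fin.ext (by simp; omega)
      rw [he, Equiv.symm_apply_apply]
      simp; omega
  right_inv := by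
    intro y
    apply Fin.ext
    by_cases h : (y:ℕ) < p
    · have h1 := glueG_lt hp L R y h
      have h2 : (glueG hp L R y : ℕ) < p := by rw [h1]; exact (L.symm ⟨y, h⟩).isLt
      rw [glueF_lt hp L R _ h2]
      have : (⟨(glueG hp L R y : ℕ), h2⟩ : Fin p) = L.symm ⟨y, h⟩ := Fin.ext h1
      rw [this, Equiv.apply_symm_apply]
    · by_cases h2 : (y:ℕ) = n
      · have h1 := glueG_eq hp L R y h2
        rw [glueF_eq hp L R _ h1, h2]
      · have hb : (y:ℕ) - p < n - p := by have := y.isLt; omega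
        have h1 := glueG_gt hp L R y (by omega) h2 hb
        have hs := (R.symm ⟨(y:ℕ) - p, hb⟩).isLt
        have h3 : p < (glueG hp L R y : ℕ) := by omega
        have hb2 : (glueG hp L R y : ℕ) - (p+1) < n - p := by omega
        rw [glueF_gt hp L R _ h3 hb2]
        have he : (⟨(glueG hp L R y : ℕ) - (p+1), hb2⟩ : Fin (n - p)) = R.symm ⟨(y:ℕ) - p, hb⟩ :=
          Fin.ext (by simp; omega)
        rw [he, Equiv.apply_symm_apply]
        simp; omega

lemma glue_pos_lt_of_val_lt (x : Fin (n+1)) (h : (glue hp L R x : ℕ) < p) : (x:ℕ) < p := by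
  by_contra hx
  rcases eq_or_lt_of_le (le_of_not_gt hx) with h2 | h2
  · rw [show ((glue hp L R x : Fin (n+1)) : ℕ) = glueF hp L R x from rfl,
      glueF_eq hp L R x h2.symm] at h
    omega
  · have hb : (x:ℕ) - (p+1) < n - p := by have := x.isLt; omega
    rw [show ((glue hp L R x : Fin (n+1)) : ℕ) = glueF hp L R x from rfl,
      glueF_gt hp L R x h2 hb] at h
    omega

lemma av_glue (hL : Av L) (hR : Av R) : Av (glue hp L R) := by
  intro a b c hab hbc h1 h2
  set π := glue hp L R with hπ
  rcases lt_trichotomy (a:ℕ) p with h | h | h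
  · -- value of a < p, so value of c < p, so c < p
    have hva : (π a : ℕ) = L ⟨a, h⟩ := glueF_lt hp L R a h
    have hvc : (π c : ℕ) < p := by have := (L ⟨a, h⟩).isLt; omega
    have hc : (c:ℕ) < p := glue_pos_lt_of_val_lt hp L R c hvc
    have hb : (b:ℕ) < p := by omega
    have hvb : (π b : ℕ) = L ⟨b, hb⟩ := glueF_lt hp L R b hb
    have hvc2 : (π c : ℕ) = L ⟨c, hc⟩ := glueF_lt hp L R c hc
    exact hL ⟨a, h⟩ ⟨b, hb⟩ ⟨c, hc⟩ hab hbc (by omega) (by omega)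
  · have hva : (π a : ℕ) = n := glueF_eq hp L R a h
    have := (π b).isLt
    omega
  · have hb : p < (b:ℕ) := by omega
    have hc : p < (c:ℕ) := by omega
    have hba : (a:ℕ) - (p+1) < n - p := by have := a.isLt; omega
    have hbb : (b:ℕ) - (p+1) < n - p := by have := b.isLt; omega
    have hbc' : (c:ℕ) - (p+1) < n - p := by have := c.isLt; omega
    have hva : (π a : ℕ) = p + R ⟨(a:ℕ) - (p+1), hba⟩ := glueF_gt hp L R a h hba
    have hvb : (π b : ℕ) = p + R ⟨(b:ℕ) - (p+1), hbb⟩ := glueF_gt hp L R b hb hbb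
    have hvc : (π c : ℕ) = p + R ⟨(c:ℕ) - (p+1), hbc'⟩ := glueF_gt hp L R c hc hbc'
    exact hR ⟨(a:ℕ) - (p+1), hba⟩ ⟨(b:ℕ) - (p+1), hbb⟩ ⟨(c:ℕ) - (p+1), hbc'⟩
      (by simp; omega) (by simp; omega) (by omega) (by omega)

lemma av_L_of_glue (h : Av (glue hp L R)) : Av L := by
  intro a b c hab hbc h1 h2
  have ha := a.isLt; have hb := b.isLt; have hc := c.isLt
  have e1 : (glue hp L R ⟨(a:ℕ), by omega⟩ : ℕ) = L a := by
    rw [show ((glue hp L R ⟨(a:ℕ), by omega⟩ : Fin (n+1)) : ℕ) = glueF hp L R _ from rfl,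
      glueF_lt hp L R _ (by simpa using ha)]
  have e2 : (glue hp L R ⟨(b:ℕ), by omega⟩ : ℕ) = L b := by
    rw [show ((glue hp L R ⟨(b:ℕ), by omega⟩ : Fin (n+1)) : ℕ) = glueF hp L R _ from rfl,
      glueF_lt hp L R _ (by simpa using hb)]
  have e3 : (glue hp L R ⟨(c:ℕ), by omega⟩ : ℕ) = L c := by
    rw [show ((glue hp L R ⟨(c:ℕ), by omega⟩ : Fin (n+1)) : ℕ) = glueF hp L R _ from rfl,
      glueF_lt hp L R _ (by simpa using hc)]
  exact h ⟨(a:ℕ), by omega⟩ ⟨(b:ℕ), by omega⟩ ⟨(c:ℕ), by omega⟩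
    (by simpa using hab) (by simpa using hbc) (by omega) (by omega)

lemma av_R_of_glue (h : Av (glue hp L R)) : Av R := by
  intro a b c hab hbc h1 h2
  have ha := a.isLt; have hb := b.isLt; have hc := c.isLt
  have e1 : (glue hp L R ⟨p + 1 + (a:ℕ), by omega⟩ : ℕ) = p + R a := by
    rw [show ((glue hp L R ⟨p + 1 + (a:ℕ), by omega⟩ : Fin (n+1)) : ℕ) = glueF hp L R _ from rfl,
      glueF_gt hp L R _ (by simp; omega) (by simp)]
    congr 2
    apply Fin.ext
    simp
  have e2 : (glue hp L R ⟨p + 1 + (b:ℕ), by omega⟩ : ℕ) = p + R b := by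
    rw [show ((glue hp L R ⟨p + 1 + (b:ℕ), by omega⟩ : Fin (n+1)) : ℕ) = glueF hp L R _ from rfl,
      glueF_gt hp L R _ (by simp; omega) (by simp)]
    congr 2
    apply Fin.ext
    simp
  have e3 : (glue hp L R ⟨p + 1 + (c:ℕ), by omega⟩ : ℕ) = p + R c := by
    rw [show ((glue hp L R ⟨p + 1 + (c:ℕ), by omega⟩ : Fin (n+1)) : ℕ) = glueF hp L R _ from rfl,
      glueF_gt hp L R _ (by simp; omega) (by simp)]
    congr 2
    apply Fin.ext
    simp
  exact h ⟨p + 1 + (a:ℕ), by omega⟩ ⟨p + 1 + (b:ℕ), by omega⟩ ⟨p + 1 + (c:ℕ), by omega⟩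
    (by simp; omega) (by simp; omega) (by omega) (by omega)

lemma glue_symm_last : ((glue hp L R).symm (Fin.last n) : ℕ) = p := by
  have : ((glue hp L R).symm (Fin.last n) : ℕ) = glueG hp L R (Fin.last n) := rfl
  rw [this, glueG_eq hp L R _ (by simp [Fin.last])]

end Glue

section Decomp
variable {n : ℕ} (π : Equiv.Perm (Fin (n+1)))

lemma pigeon (S T : Finset (Fin (n+1))) (h : ∀ x ∈ S, π x ∈ T) : S.card ≤ T.card :=
  Finset.card_le_card_of_injOn π h (π.injective.injOn)

lemma claim1 (hAv : Av π) : ∀ x : Fin (n+1), (x:ℕ) < (π.symm (Fin.last n) : ℕ) →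
    (π x : ℕ) < (π.symm (Fin.last n) : ℕ) := by
  set P := π.symm (Fin.last n) with hP
  have hπP : π P = Fin.last n := by rw [hP]; exact π.apply_symm_apply _
  intro x hx
  by_contra hge
  push_neg at hge
  have hxP : x ≠ P := fun he => by rw [he] at hx; omega
  have hπx : (π x : ℕ) < n := by
    have h1 : π x ≠ Fin.last n := fun he => hxP (by
      have := congrArg π.symm he; rwa [Equiv.symm_apply_apply] at this)
    have := (π x).isLt
    have : (π x : ℕ) ≠ n := fun he => h1 (Fin.ext (by simp [he]))
    omega
  have hex : ∃ k ∈ insert x (Finset.Ici P), (π k : ℕ) < P := by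
    by_contra hno
    push_neg at hno
    have hcard := pigeon π (insert x (Finset.Ici P)) (Finset.Ici P) (by
      intro k hk
      rw [Finset.mem_Ici]
      rw [Fin.le_def]
      exact hno k hk)
    rw [Finset.card_insert_of_notMem (by rw [Finset.mem_Ici, Fin.le_def]; omega)] at hcard
    omega
  obtain ⟨k, hk, hkv⟩ := hex
  rcases Finset.mem_insert.mp hk with he | hmem
  · rw [he] at hkv; omega
  · rw [Finset.mem_Ici, Fin.le_def] at hmem
    have hkP : k ≠ P := fun he => by rw [he, hπP] at hkv; simp [Fin.last] at hkv; omega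
    have hkP2 : (P:ℕ) < k := by
      rcases eq_or_lt_of_le hmem with h1 | h1
      · exact absurd (Fin.ext h1.symm) hkP
      · exact h1
    exact hAv x P k hx hkP2 (by omega) (by rw [hπP]; simp [Fin.last]; omega)

lemma claim2 (hAv : Av π) : ∀ x : Fin (n+1), (π.symm (Fin.last n) : ℕ) < (x:ℕ) →
    (π.symm (Fin.last n) : ℕ) ≤ (π x : ℕ) ∧ (π x : ℕ) < n := by
  set P := π.symm (Fin.last n) with hP
  have hπP : π P = Fin.last n := by rw [hP]; exact π.apply_symm_apply _
  intro x hx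
  have hxP : x ≠ P := fun he => by rw [he] at hx; omega
  have hπx : (π x : ℕ) < n := by
    have h1 : π x ≠ Fin.last n := fun he => hxP (by
      have := congrArg π.symm he; rwa [Equiv.symm_apply_apply] at this)
    have := (π x).isLt
    have : (π x : ℕ) ≠ n := fun he => h1 (Fin.ext (by simp [he]))
    omega
  refine ⟨?_, hπx⟩
  by_contra hlt
  push_neg at hlt
  have hcard := pigeon π (insert x (Finset.Iio P)) (Finset.Iio P) (by
    intro k hk
    rcases Finset.mem_insert.mp hk with he | hmem
    · rw [he, Finset.mem_Iio, Fin.lt_def]; exact hlt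
    · rw [Finset.mem_Iio, Fin.lt_def] at hmem ⊢
      exact claim1 π hAv k hmem)
  rw [Finset.card_insert_of_notMem (by rw [Finset.mem_Iio, Fin.lt_def]; omega)] at hcard
  omega

noncomputable def Lpart (hAv : Av π) : Equiv.Perm (Fin ((π.symm (Fin.last n) : ℕ))) :=
  Equiv.ofBijective
    (fun i => (⟨π ⟨i, by have := i.isLt; have := (π.symm (Fin.last n)).isLt; omega⟩,
      claim1 π hAv _ (by simpa using i.isLt)⟩ : Fin ((π.symm (Fin.last n) : ℕ))))
    (by
      apply Finite.injective_iff_bijective.mp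
      intro i j hij
      have h1 := congrArg Fin.val hij
      simp only [] at h1
      have h2 : π ⟨i, by have := i.isLt; have := (π.symm (Fin.last n)).isLt; omega⟩
          = π ⟨j, by have := j.isLt; have := (π.symm (Fin.last n)).isLt; omega⟩ :=
        Fin.ext h1
      have := π.injective h2
      exact Fin.ext (by simpa using congrArg Fin.val this))

lemma Lpart_val (hAv : Av π) (i : Fin ((π.symm (Fin.last n) : ℕ))) :
    (Lpart π hAv i : ℕ)
      = π ⟨i, by have := i.isLt; have := (π.symm (Fin.last n)).isLt; omega⟩ := rfl

noncomputable def Rpart (hAv : Av π) : Equiv.Perm (Fin (n - (π.symm (Fin.last n) : ℕ))) :=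
  Equiv.ofBijective
    (fun j => (⟨(π ⟨(π.symm (Fin.last n) : ℕ) + 1 + j, by have := j.isLt; omega⟩ : ℕ)
      - (π.symm (Fin.last n) : ℕ), by
      have h := claim2 π hAv ⟨(π.symm (Fin.last n) : ℕ) + 1 + j, by have := j.isLt; omega⟩
        (by simp; omega)
      omega⟩ : Fin (n - (π.symm (Fin.last n) : ℕ))))
    (by
      apply Finite.injective_iff_bijective.mp
      intro i j hij
      have h1 := congrArg Fin.val hij
      simp only [] at h1
      have hi := claim2 π hAv ⟨(π.symm (Fin.last n) : ℕ) + 1 + i, by have := i.isLt; omega⟩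
        (by simp; omega)
      have hj := claim2 π hAv ⟨(π.symm (Fin.last n) : ℕ) + 1 + j, by have := j.isLt; omega⟩
        (by simp; omega)
      have h2 : π ⟨(π.symm (Fin.last n) : ℕ) + 1 + i, by have := i.isLt; omega⟩
          = π ⟨(π.symm (Fin.last n) : ℕ) + 1 + j, by have := j.isLt; omega⟩ :=
        Fin.ext (by omega)
      have := congrArg Fin.val (π.injective h2)
      simp only [] at this
      exact Fin.ext (by omega))

lemma Rpart_val (hAv : Av π) (j : Fin (n - (π.symm (Fin.last n) : ℕ))) :
    (Rpart π hAv j : ℕ)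
      = (π ⟨(π.symm (Fin.last n) : ℕ) + 1 + j, by have := j.isLt; omega⟩ : ℕ)
        - (π.symm (Fin.last n) : ℕ) := rfl

lemma glue_eq_self (hAv : Av π) :
    glue (by have := (π.symm (Fin.last n)).isLt; omega : (π.symm (Fin.last n) : ℕ) ≤ n)
      (Lpart π hAv) (Rpart π hAv) = π := by
  apply Equiv.ext
  intro x
  apply Fin.ext
  set P := π.symm (Fin.last n) with hP
  have hPn : (P:ℕ) ≤ n := by have := P.isLt; omega
  rcases lt_trichotomy (x:ℕ) ((P:ℕ)) with h | h | h
  · rw [show ((glue hPn (Lpart π hAv) (Rpart π hAv) x : Fin (n+1)) : ℕ)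
      = glueF hPn (Lpart π hAv) (Rpart π hAv) x from rfl, glueF_lt _ _ _ x h,
      Lpart_val π hAv]
  · have hx : x = P := Fin.ext h
    rw [show ((glue hPn (Lpart π hAv) (Rpart π hAv) x : Fin (n+1)) : ℕ)
      = glueF hPn (Lpart π hAv) (Rpart π hAv) x from rfl, glueF_eq _ _ _ x h]
    rw [hx, hP]
    simp
  · have hb : (x:ℕ) - ((P:ℕ)+1) < n - P := by have := x.isLt; omega
    rw [show ((glue hPn (Lpart π hAv) (Rpart π hAv) x : Fin (n+1)) : ℕ)
      = glueF hPn (Lpart π hAv) (Rpart π hAv) x from rfl, glueF_gt _ _ _ x h hb,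
      Rpart_val π hAv]
    have hxe : (⟨(P:ℕ) + 1 + ((x:ℕ) - ((P:ℕ)+1)), by have := x.isLt; omega⟩ : Fin (n+1)) = x :=
      Fin.ext (by simp; omega)
    rw [hxe]
    have := (claim2 π hAv x h).1
    omega
end Decomp

noncomputable def Phi (n : ℕ) :
    (Σ k : Fin (n+1), {L : Equiv.Perm (Fin (k:ℕ)) // Av L}
      × {R : Equiv.Perm (Fin (n - (k:ℕ))) // Av R})
    → {π : Equiv.Perm (Fin (n+1)) // Av π} :=
  fun t => ⟨glue (by have := t.1.isLt; omega) t.2.1.1 t.2.2.1,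
    av_glue _ t.2.1.1 t.2.2.1 t.2.1.2 t.2.2.2⟩


set_option maxHeartbeats 1000000 in
lemma Phi_bij (n : ℕ) : Function.Bijective (Phi n) := by
  constructor
  · rintro ⟨k, ⟨L, hL⟩, ⟨R, hR⟩⟩ ⟨k', ⟨L', hL'⟩, ⟨R', hR'⟩⟩ h
    have hk1 : (k:ℕ) ≤ n := by have := k.isLt; omega
    have hk1' : (k':ℕ) ≤ n := by have := k'.isLt; omega
    have hg : glue hk1 L R = glue hk1' L' R' := congrArg Subtype.val h
    have hk : k = k' := by
      apply Fin.ext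
      rw [← glue_symm_last hk1 L R, ← glue_symm_last hk1' L' R', hg]
    subst hk
    have hLe : L = L' := by
      apply Equiv.ext
      intro i
      apply Fin.ext
      obtain ⟨x, hxv⟩ : ∃ x : Fin (n+1), (x:ℕ) = (i:ℕ) :=
        ⟨⟨(i:ℕ), by have := i.isLt; have := k.isLt; omega⟩, rfl⟩
      have hi : (x:ℕ) < (k:ℕ) := by rw [hxv]; exact i.isLt
      have e1 := glueF_lt hk1 L R x hi
      have e2 := glueF_lt hk1' L' R' x hi
      have key : ((glueF hk1 L R x : Fin (n+1)) : ℕ) = ((glueF hk1' L' R' x : Fin (n+1)) : ℕ) := by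
        have := DFunLike.congr_fun hg x
        exact congrArg Fin.val this
      have he : (⟨(x:ℕ), hi⟩ : Fin (k:ℕ)) = i := Fin.ext hxv
      have hLv := congrArg (fun t => ((L t : Fin (k:ℕ)) : ℕ)) he
      have hLv' := congrArg (fun t => ((L' t : Fin (k:ℕ)) : ℕ)) he
      omega
    have hRe : R = R' := by
      apply Equiv.ext
      intro j
      apply Fin.ext
      obtain ⟨x, hxv⟩ : ∃ x : Fin (n+1), (x:ℕ) = (k:ℕ) + 1 + (j:ℕ) :=
        ⟨⟨(k:ℕ) + 1 + (j:ℕ), by have := j.isLt; omega⟩, rfl⟩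
      have hj : (k:ℕ) < (x:ℕ) := by omega
      have hb : (x:ℕ) - ((k:ℕ)+1) < n - (k:ℕ) := by have := j.isLt; omega
      have e1 := glueF_gt hk1 L R x hj hb
      have e2 := glueF_gt hk1' L' R' x hj hb
      have key : ((glueF hk1 L R x : Fin (n+1)) : ℕ) = ((glueF hk1' L' R' x : Fin (n+1)) : ℕ) := by
        have := DFunLike.congr_fun hg x
        exact congrArg Fin.val this
      have hje : (⟨(x:ℕ) - ((k:ℕ)+1), hb⟩ : Fin (n - (k:ℕ))) = j := Fin.ext (by
        show (x:ℕ) - ((k:ℕ)+1) = (j:ℕ)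
        omega)
      have hRv := congrArg (fun t => ((R t : Fin (n - (k:ℕ))) : ℕ)) hje
      have hRv' := congrArg (fun t => ((R' t : Fin (n - (k:ℕ))) : ℕ)) hje
      omega
    subst hLe; subst hRe; rfl
  · rintro ⟨π, hAv⟩
    refine ⟨⟨π.symm (Fin.last n), ⟨Lpart π hAv, ?_⟩, ⟨Rpart π hAv, ?_⟩⟩, ?_⟩
    · have h := glue_eq_self π hAv
      apply av_L_of_glue (by have := (π.symm (Fin.last n)).isLt; omega :
        ((π.symm (Fin.last n) : Fin (n+1)) : ℕ) ≤ n) (Lpart π hAv) (Rpart π hAv)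
      rw [h]
      exact hAv
    · have h := glue_eq_self π hAv
      apply av_R_of_glue (by have := (π.symm (Fin.last n)).isLt; omega :
        ((π.symm (Fin.last n) : Fin (n+1)) : ℕ) ≤ n) (Lpart π hAv) (Rpart π hAv)
      rw [h]
      exact hAv
    · exact Subtype.ext (glue_eq_self π hAv)


lemma card_av : ∀ m : ℕ, Nat.card {π : Equiv.Perm (Fin m) // Av π} = catalan m := by
  intro m
  induction m using Nat.strong_induction_on with
  | _ m ih =>
    match m with
    | 0 =>
      have h0 : ∀ π : Equiv.Perm (Fin 0), Av π := fun π a _ _ _ _ _ _ => a.elim0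
      rw [Nat.card_congr (Equiv.subtypeUnivEquiv h0), Nat.card_eq_fintype_card]
      simp [catalan]
    | m+1 =>
      classical
      rw [← Nat.card_congr (Equiv.ofBijective _ (Phi_bij m))]
      rw [Nat.card_eq_fintype_card, Fintype.card_sigma]
      simp only [Fintype.card_prod]
      rw [catalan_succ]
      apply Finset.sum_congr rfl
      intro k _
      rw [← Nat.card_eq_fintype_card, ← Nat.card_eq_fintype_card,
        ih (k:ℕ) (by have := k.isLt; omega), ih (m - (k:ℕ)) (by omega)]

theorem stmt18 (n : ℕ) :
    (∀ π : Equiv.Perm (Fin n), IsFishburn π →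
      (AvoidsPat π [3, 1, 4, 2] ↔ AvoidsPat π [2, 3, 1])) ∧
    Nat.card {π : Equiv.Perm (Fin n) // IsFishburn π ∧ AvoidsPat π [3, 1, 4, 2]} =
      catalan n := by
  have hbridge : ∀ π : Equiv.Perm (Fin n), (IsFishburn π ∧ AvoidsPat π [3, 1, 4, 2]) ↔ Av π := by
    intro π
    constructor
    · rintro ⟨hF, hA⟩
      exact av_of_fishburn_no3142 π hF (fun occ => hA ((contains3142_iff π).mpr occ))
    · intro hAv
      exact ⟨av_fishburn π hAv, fun hc => no3142_of_av π hAv ((contains3142_iff π).mp hc)⟩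
  constructor
  · intro π hF
    constructor
    · intro h3142
      have hAv := av_of_fishburn_no3142 π hF (fun occ => h3142 ((contains3142_iff π).mpr occ))
      intro hc
      obtain ⟨a, b, c, h1, h2, h3, h4⟩ := (contains231_iff π).mp hc
      exact hAv a b c h1 h2 h3 h4
    · intro h231
      have hAv : Av π := by
        intro a b c h1 h2 h3 h4
        exact h231 ((contains231_iff π).mpr ⟨a, b, c, h1, h2, h3, h4⟩)
      exact fun hc => no3142_of_av π hAv ((contains3142_iff π).mp hc)
  · rw [Nat.card_congr (Equiv.subtypeEquivRight hbridge), card_av]
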